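/- arXiv:2311.04790 — 3 statements merged into one kernel-verified Lean document; each statement's English description precedes it below -/
import Mathlib

section
/- Under the stated hypotheses, for every 𝗑 ∈ X the map ω ↦ L_ω*(T_ω(L_ω 𝗑)) is Bochner μ-integrable, so the operator T : X → X : 𝗑 ↦ ∫_Ω L_ω*(T_ω(L_ω 𝗑)) μ(dω) is well defined; moreover τ = ∫_Ω ‖L_ω‖² β(ω) μ(dω) < +∞ and T is τ-Lipschitzian. -/
open MeasureTheory
open scoped ENNReal NNReal

open Filter TopologicalSpace
open scoped InnerProductSpace

/-! The integrand is bounded pointwise by `‖L_ω‖ ‖T_ω (L_ω ξ)‖`, a product of two `L²(μ)`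
functions: `‖L_ω‖` by (D), and `ω ↦ T_ω (L_ω ξ)` because it differs from the `L²` map
`ω ↦ T_ω (z ω)` by at most `(esssup β) ‖L_ω ξ - z ω‖`. Hölder's inequality gives integrability,
and integrating `‖L_ω* T_ω L_ω ξ - L_ω* T_ω L_ω η‖ ≤ ‖L_ω‖² β(ω) ‖ξ - η‖` gives the Lipschitz
bound. Measurability comes from separability: a map into a separable Hilbert space is measurable
as soon as its inner products with fixed vectors are (expand it in a countable Hilbert basis), and
`⟪v, L_ω* y⟫ = ⟪L_ω v, y⟫`. -/

section OperatorNorm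

variable {𝕜 E F : Type*} [NontriviallyNormedField 𝕜] [NormedAddCommGroup E] [NormedSpace 𝕜 E]
  [NormedAddCommGroup F] [NormedSpace 𝕜 F]

theorem ContinuousLinearMap.opNorm_eq_iSup_div_of_denseRange {d : ℕ → E} (hd : DenseRange d)
    (A : E →L[𝕜] F) : ‖A‖ = ⨆ n, ‖A (d n)‖ / ‖d n‖ := by
  have hle : ∀ n, ‖A (d n)‖ / ‖d n‖ ≤ ‖A‖ := fun n => A.ratio_le_opNorm (d n)
  have hbdd : BddAbove (Set.range fun n => ‖A (d n)‖ / ‖d n‖) := ⟨‖A‖, Set.forall_mem_range.2 hle⟩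
  refine le_antisymm (A.opNorm_le_bound ((div_nonneg (norm_nonneg _) (norm_nonneg _)).trans
    (le_ciSup hbdd 0)) fun x => hd.induction_on x
      (isClosed_le A.continuous.norm (continuous_const.mul continuous_norm)) fun n => ?_)
    (ciSup_le hle)
  rcases eq_or_ne (d n) 0 with h | h
  · simp [h]
  · rw [← div_le_iff₀ (norm_pos_iff.2 h)]
    exact le_ciSup hbdd n

theorem measurable_opNorm_of_measurable_apply {Ω : Type*} [MeasurableSpace Ω] [SeparableSpace E]
    [MeasurableSpace F] [OpensMeasurableSpace F] {A : Ω → E →L[𝕜] F}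
    (hA : ∀ x, Measurable fun ω => A ω x) : Measurable fun ω => ‖A ω‖ := by
  obtain ⟨d, hd⟩ := exists_dense_seq E
  simp_rw [ContinuousLinearMap.opNorm_eq_iSup_div_of_denseRange hd]
  exact Measurable.iSup fun n => (hA (d n)).norm.div_const _

end OperatorNorm

section Hilbert

variable {𝕜 E F : Type*} [RCLike 𝕜] [NormedAddCommGroup E] [InnerProductSpace 𝕜 E]
  [NormedAddCommGroup F] [InnerProductSpace 𝕜 F]

theorem Orthonormal.countable [SeparableSpace E] {ι : Type*} {v : ι → E}
    (hv : Orthonormal 𝕜 v) : Countable ι := by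
  refine Pairwise.countable_of_isOpen_disjoint (s := fun i => Metric.ball (v i) (1 / 2))
    (fun i j hij => Metric.ball_disjoint_ball ?_) (fun _ => Metric.isOpen_ball)
    (fun _ => Metric.nonempty_ball.2 (by norm_num))
  have hdist : dist (v i) (v j) ^ 2 = 2 := by
    rw [dist_eq_norm, @norm_sub_sq 𝕜, hv.2 hij, hv.1 i, hv.1 j]
    norm_num
  nlinarith [dist_nonneg (x := v i) (y := v j)]

theorem measurable_of_forall_measurable_inner {Ω : Type*} [MeasurableSpace Ω] [SeparableSpace E]
    [CompleteSpace E] [MeasurableSpace E] [BorelSpace E] {f : Ω → E}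
    (hf : ∀ v, Measurable fun ω => ⟪v, f ω⟫_𝕜) : Measurable f := by
  obtain ⟨w, b, -⟩ := exists_hilbertBasis 𝕜 E
  have := b.orthonormal.countable
  refine measurable_of_tendsto_metrizable' atTop
    (fun s => Finset.measurable_sum s fun i _ => (hf (b i)).smul_const (b i)) ?_
  refine tendsto_pi_nhds.2 fun ω => ?_
  have hsum := b.hasSum_repr (f ω)
  simp only [b.repr_apply_apply] at hsum
  exact hsum

theorem measurable_adjoint_apply {Ω : Type*} [MeasurableSpace Ω]
    [SeparableSpace E] [CompleteSpace E] [MeasurableSpace E] [BorelSpace E]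
    [SecondCountableTopology F] [CompleteSpace F] [MeasurableSpace F] [OpensMeasurableSpace F]
    {A : Ω → E →L[𝕜] F} (hA : ∀ x, Measurable fun ω => A ω x) {y : Ω → F} (hy : Measurable y) :
    Measurable fun ω => (A ω).adjoint (y ω) :=
  measurable_of_forall_measurable_inner (𝕜 := 𝕜) fun v => by
    simpa only [ContinuousLinearMap.adjoint_inner_right] using (hA v).inner hy

end Hilbert

namespace MeasureTheory

section Lp

variable {Ω : Type*} [MeasurableSpace Ω] {μ : Measure Ω}
  {E F : Type*} [NormedAddCommGroup E] [NormedAddCommGroup F]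

theorem memLp_two_iff_lintegral_nnnorm_sq_lt_top {f : Ω → E} (hf : AEStronglyMeasurable f μ) :
    MemLp f 2 μ ↔ (∫⁻ ω, (‖f ω‖₊ : ℝ≥0∞) ^ 2 ∂μ) < ⊤ := by
  rw [MemLp, eLpNorm_lt_top_iff_lintegral_rpow_enorm_lt_top two_ne_zero ENNReal.ofNat_ne_top]
  simp [hf, enorm_eq_nnnorm]

theorem MemLp.comp_fiberwise_lipschitz {p : ℝ≥0∞} {T : Ω → E → F} {β : Ω → ℝ} {M : ℝ}
    (hT : ∀ ω x y, ‖T ω x - T ω y‖ ≤ β ω * ‖x - y‖) (hβ : ∀ᵐ ω ∂μ, β ω ≤ M)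
    {x z : Ω → E} (hx : MemLp x p μ) (hz : MemLp z p μ) (hTz : MemLp (fun ω => T ω (z ω)) p μ)
    (hTx : AEStronglyMeasurable (fun ω => T ω (x ω)) μ) :
    MemLp (fun ω => T ω (x ω)) p μ := by
  refine (hTz.norm.add ((hx.sub hz).norm.const_mul M)).mono' hTx ?_
  filter_upwards [hβ] with ω hβω
  calc ‖T ω (x ω)‖ ≤ ‖T ω (z ω)‖ + ‖T ω (x ω) - T ω (z ω)‖ := norm_le_insert' _ _
    _ ≤ ‖T ω (z ω)‖ + M * ‖x ω - z ω‖ := by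
      gcongr
      exact (hT ω _ _).trans (mul_le_mul_of_nonneg_right hβω (norm_nonneg _))

variable {𝕜 : Type*} [NontriviallyNormedField 𝕜] [NormedSpace 𝕜 E] [NormedSpace 𝕜 F]

theorem MemLp.clm_apply_const {p : ℝ≥0∞} {A : Ω → E →L[𝕜] F} (hA : MemLp (fun ω => ‖A ω‖) p μ)
    (x : E) (hAx : AEStronglyMeasurable (fun ω => A ω x) μ) : MemLp (fun ω => A ω x) p μ :=
  (hA.mul_const ‖x‖).mono' hAx (ae_of_all _ fun ω => (A ω).le_opNorm x)

theorem MemLp.integrable_clm_apply {p q : ℝ≥0∞} [ENNReal.HolderTriple p q 1] {A : Ω → E →L[𝕜] F}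
    {y : Ω → E} (hA : MemLp (fun ω => ‖A ω‖) p μ) (hy : MemLp y q μ)
    (hAy : AEStronglyMeasurable (fun ω => A ω (y ω)) μ) : Integrable (fun ω => A ω (y ω)) μ :=
  (hA.integrable_mul hy.norm).mono' hAy (ae_of_all _ fun ω => (A ω).le_opNorm (y ω))

end Lp

end MeasureTheory

theorem ContinuousLinearMap.norm_adjoint_comp_sub_le {𝕜 E F : Type*} [RCLike 𝕜]
    [NormedAddCommGroup E] [InnerProductSpace 𝕜 E] [CompleteSpace E]
    [NormedAddCommGroup F] [InnerProductSpace 𝕜 F] [CompleteSpace F]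
    (A : E →L[𝕜] F) {T : F → F} {b : ℝ} (hb : 0 ≤ b) (hT : ∀ x y, ‖T x - T y‖ ≤ b * ‖x - y‖)
    (x y : E) : ‖A.adjoint (T (A x)) - A.adjoint (T (A y))‖ ≤ ‖A‖ ^ 2 * b * ‖x - y‖ :=
  calc ‖A.adjoint (T (A x)) - A.adjoint (T (A y))‖
      ≤ ‖A‖ * ‖T (A x) - T (A y)‖ := by
        rw [← map_sub, ← ContinuousLinearMap.adjoint.norm_map A]
        exact A.adjoint.le_opNorm _
    _ ≤ ‖A‖ * (b * (‖A‖ * ‖x - y‖)) := by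
        gcongr
        refine (hT _ _).trans ?_
        rw [← map_sub]
        gcongr
        exact A.le_opNorm _
    _ = ‖A‖ ^ 2 * b * ‖x - y‖ := by ring

theorem norm_integral_sub_integral_le {Ω E : Type*} [MeasurableSpace Ω] {μ : Measure Ω}
    [NormedAddCommGroup E] [NormedSpace ℝ E] {f g : Ω → E} {c : Ω → ℝ} {k : ℝ}
    (hf : Integrable f μ) (hg : Integrable g μ) (hc : Integrable c μ)
    (hfg : ∀ ω, ‖f ω - g ω‖ ≤ c ω * k) : ‖∫ ω, f ω ∂μ - ∫ ω, g ω ∂μ‖ ≤ (∫ ω, c ω ∂μ) * k := by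
  rw [← integral_sub hf hg, ← integral_mul_const]
  exact norm_integral_le_of_norm_le (hc.mul_const k) (ae_of_all _ hfg)

theorem stmt_1_general {Ω : Type*} [MeasurableSpace Ω] {μ : Measure Ω}
    {X : Type*} [NormedAddCommGroup X] [InnerProductSpace ℝ X] [CompleteSpace X]
    [SecondCountableTopology X] [MeasurableSpace X] [BorelSpace X]
    {H : Type*} [NormedAddCommGroup H] [InnerProductSpace ℝ H] [CompleteSpace H]
    [SecondCountableTopology H] [MeasurableSpace H] [BorelSpace H]
    (β : Ω → ℝ) (hβmeas : Measurable β) (hβpos : ∀ ω, 0 < β ω)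
    (hβbdd : ∃ M : ℝ, ∀ᵐ ω ∂μ, β ω ≤ M)
    (T : Ω → H → H) (hTlip : ∀ ω x y, ‖T ω x - T ω y‖ ≤ β ω * ‖x - y‖)
    (L : Ω → X →L[ℝ] H)
    (hA : ∀ x : Ω → H, Measurable x → (∫⁻ ω, (‖x ω‖₊ : ℝ≥0∞) ^ 2 ∂μ) < ⊤ →
      Measurable fun ω => T ω (x ω))
    (hB : ∃ z : Ω → H, Measurable z ∧ (∫⁻ ω, (‖z ω‖₊ : ℝ≥0∞) ^ 2 ∂μ) < ⊤ ∧
      (∫⁻ ω, (‖T ω (z ω)‖₊ : ℝ≥0∞) ^ 2 ∂μ) < ⊤)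
    (hC : ∀ ξ : X, Measurable fun ω => L ω ξ)
    (hD : (∫⁻ ω, (‖L ω‖₊ : ℝ≥0∞) ^ 2 ∂μ) < ⊤) :
    (∀ ξ : X, Integrable (fun ω => (L ω).adjoint (T ω (L ω ξ))) μ) ∧
    Integrable (fun ω => ‖L ω‖ ^ 2 * β ω) μ ∧
    ∀ ξ η : X,
      ‖(∫ ω, (L ω).adjoint (T ω (L ω ξ)) ∂μ) - ∫ ω, (L ω).adjoint (T ω (L ω η)) ∂μ‖ ≤
        (∫ ω, ‖L ω‖ ^ 2 * β ω ∂μ) * ‖ξ - η‖ := by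
  obtain ⟨M, hM⟩ := hβbdd
  obtain ⟨z, hz, hz2, hTz2⟩ := hB
  have hL : MemLp (fun ω => ‖L ω‖) 2 μ :=
    (memLp_two_iff_lintegral_nnnorm_sq_lt_top
      (measurable_opNorm_of_measurable_apply hC).aestronglyMeasurable).2 (by simpa using hD)
  have hLξ (ξ : X) : MemLp (fun ω => L ω ξ) 2 μ := hL.clm_apply_const ξ (hC ξ).aestronglyMeasurable
  have hTLξ_meas (ξ : X) : Measurable fun ω => T ω (L ω ξ) :=
    hA _ (hC ξ) ((memLp_two_iff_lintegral_nnnorm_sq_lt_top (hC ξ).aestronglyMeasurable).1 (hLξ ξ))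
  have hTLξ (ξ : X) : MemLp (fun ω => T ω (L ω ξ)) 2 μ :=
    (hLξ ξ).comp_fiberwise_lipschitz hTlip hM
      ((memLp_two_iff_lintegral_nnnorm_sq_lt_top hz.aestronglyMeasurable).2 hz2)
      ((memLp_two_iff_lintegral_nnnorm_sq_lt_top (hA z hz hz2).aestronglyMeasurable).2 hTz2)
      (hTLξ_meas ξ).aestronglyMeasurable
  have hint (ξ : X) : Integrable (fun ω => (L ω).adjoint (T ω (L ω ξ))) μ :=
    MemLp.integrable_clm_apply (A := fun ω => (L ω).adjoint) (by simpa using hL) (hTLξ ξ)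
      (measurable_adjoint_apply hC (hTLξ_meas ξ)).aestronglyMeasurable
  have hτ : Integrable (fun ω => ‖L ω‖ ^ 2 * β ω) μ :=
    hL.integrable_sq.mul_bdd hβmeas.aestronglyMeasurable
      (hM.mono fun ω hMω => by rwa [Real.norm_of_nonneg (hβpos ω).le])
  exact ⟨hint, hτ, fun ξ η => norm_integral_sub_integral_le (hint ξ) (hint η) hτ
    fun ω => (L ω).norm_adjoint_comp_sub_le (hβpos ω).le (hTlip ω) ξ η⟩

/-- Proposition 3.3(i): under the stated hypotheses, for every `ξ ∈ X` the
map `ω ↦ L_ω*(T_ω(L_ω ξ))` is Bochner `μ`-integrable, so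
`T : ξ ↦ ∫ L_ω*(T_ω(L_ω ξ)) dμ(ω)` is well defined; moreover
`τ = ∫ ‖L_ω‖² β(ω) dμ(ω) < +∞` and `T` is `τ`-Lipschitzian. -/
theorem stmt_1 {Ω : Type*} [MeasurableSpace Ω] {μ : Measure Ω} [SigmaFinite μ] [μ.IsComplete]
    {X : Type*} [NormedAddCommGroup X] [InnerProductSpace ℝ X] [CompleteSpace X]
    [SecondCountableTopology X] [MeasurableSpace X] [BorelSpace X]
    {H : Type*} [NormedAddCommGroup H] [InnerProductSpace ℝ H] [CompleteSpace H]
    [SecondCountableTopology H] [MeasurableSpace H] [BorelSpace H]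
    (β : Ω → ℝ) (hβmeas : Measurable β) (hβpos : ∀ ω, 0 < β ω)
    (hβbdd : ∃ M : ℝ, ∀ᵐ ω ∂μ, β ω ≤ M)
    (T : Ω → H → H) (hTlip : ∀ ω x y, ‖T ω x - T ω y‖ ≤ β ω * ‖x - y‖)
    (L : Ω → X →L[ℝ] H)
    (hA : ∀ x : Ω → H, Measurable x → (∫⁻ ω, (‖x ω‖₊ : ℝ≥0∞) ^ 2 ∂μ) < ⊤ →
      Measurable fun ω => T ω (x ω))
    (hB : ∃ z : Ω → H, Measurable z ∧ (∫⁻ ω, (‖z ω‖₊ : ℝ≥0∞) ^ 2 ∂μ) < ⊤ ∧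
      (∫⁻ ω, (‖T ω (z ω)‖₊ : ℝ≥0∞) ^ 2 ∂μ) < ⊤)
    (hC : ∀ ξ : X, Measurable fun ω => L ω ξ)
    (hD : (∫⁻ ω, (‖L ω‖₊ : ℝ≥0∞) ^ 2 ∂μ) < ⊤) :
    (∀ ξ : X, Integrable (fun ω => (L ω).adjoint (T ω (L ω ξ))) μ) ∧
    Integrable (fun ω => ‖L ω‖ ^ 2 * β ω) μ ∧
    ∀ ξ η : X,
      ‖(∫ ω, (L ω).adjoint (T ω (L ω ξ)) ∂μ) - ∫ ω, (L ω).adjoint (T ω (L ω η)) ∂μ‖ ≤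
        (∫ ω, ‖L ω‖ ^ 2 * β ω ∂μ) * ‖ξ - η‖ :=
  stmt_1_general β hβmeas hβpos hβbdd T hTlip L hA hB hC hD
end

section
/- Under the stated hypotheses, the integral resolvent mixture W = rmi(L_ω, A_ω)_{ω∈Ω} and the integral resolvent comixture C = rcm(L_ω, A_ω)_{ω∈Ω} are maximally monotone operators on X. -/
open MeasureTheory
open scoped ENNReal NNReal

/-- A set-valued operator `A : H → Set H` (identified with its graph) is monotone if
`⟪x − y, u − v⟫ ≥ 0` whenever `u ∈ A x` and `v ∈ A y`. -/
def IsMonotoneOp {H : Type*} [NormedAddCommGroup H] [InnerProductSpace ℝ H]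
    (A : H → Set H) : Prop :=
  ∀ ⦃x u y v : H⦄, u ∈ A x → v ∈ A y → (0 : ℝ) ≤ inner ℝ (x - y) (u - v)

/-- `A` is maximally monotone: it is monotone and its graph is not properly contained in the
graph of any monotone operator. -/
def IsMaxMonotone {H : Type*} [NormedAddCommGroup H] [InnerProductSpace ℝ H]
    (A : H → Set H) : Prop :=
  IsMonotoneOp A ∧ ∀ B : H → Set H, IsMonotoneOp B → (∀ x, A x ⊆ B x) → ∀ x, B x ⊆ A x

/-- The inverse operator `A⁻¹`, whose graph is `{(u, x) : (x, u) ∈ gra A}`. -/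
def graphInv {H : Type*} (A : H → Set H) : H → Set H := fun u => {x | u ∈ A x}

/-- `J` is the resolvent `(Id + A)⁻¹` of `A` (as a single-valued, everywhere-defined map):
`J x = y ↔ x − y ∈ A y`. -/
def IsResolventOf {H : Type*} [AddCommGroup H] (A : H → Set H) (J : H → H) : Prop :=
  ∀ x y, J x = y ↔ x - y ∈ A y

/-- For a single-valued map `R : X → X`, `rmiOp R = R⁻¹ − Id` as a set-valued operator:
`u ∈ (R⁻¹ − Id)(x) ↔ R (x + u) = x`. -/
def rmiOp {X : Type*} [AddCommGroup X] (R : X → X) : X → Set X :=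
  fun x => {u | R (x + u) = x}

/-! Each resolvent `J_{A_ω}` is firmly nonexpansive, and firm nonexpansiveness survives the
mixture `T ξ = ∫ L_ω* (J_{A_ω} (L_ω ξ)) dμ`: writing `d_ω = J_{A_ω} (L_ω ξ) - J_{A_ω} (L_ω η)`,
firmness of the fibres gives `∫ ‖d_ω‖² ≤ ⟪ξ - η, T ξ - T η⟫`, and `∫ ‖L_ω‖² ≤ 1` gives
`‖T ξ - T η‖² ≤ ∫ ‖d_ω‖²`. An everywhere defined firmly nonexpansive `T` is the resolvent of the
maximally monotone operator `T⁻¹ - Id` (Minty). The comixture is the inverse of the mixture of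
the resolvents `J_{A_ω⁻¹} = Id - J_{A_ω}`, and inversion preserves maximal monotonicity. All the
integrals are finite because at the point `x + x*` of the domain hypothesis the resolvents take
the square-integrable values `x` and `x*`. -/

open scoped RealInnerProductSpace

namespace IsResolventOf

variable {G : Type*} [AddCommGroup G] {A : G → Set G} {J : G → G}

theorem mem_sub (hJ : IsResolventOf A J) (x : G) : x - J x ∈ A (J x) :=
  (hJ x (J x)).1 rfl

/-- Moreau's decomposition. -/
theorem graphInv_apply {Jinv : G → G} (hJ : IsResolventOf A J)
    (hJinv : IsResolventOf (graphInv A) Jinv) (x : G) : Jinv x = x - J x :=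
  (hJinv x _).2 (by rw [sub_sub_cancel]; exact hJ.mem_sub x)

end IsResolventOf

section Operators

variable {H : Type*} [NormedAddCommGroup H] [InnerProductSpace ℝ H]

def FirmlyNonexpansive (T : H → H) : Prop :=
  ∀ x y, ‖T x - T y‖ ^ 2 ≤ ⟪x - y, T x - T y⟫

namespace FirmlyNonexpansive

variable {T : H → H}

theorem lipschitzWith (hT : FirmlyNonexpansive T) : LipschitzWith 1 T := by
  refine LipschitzWith.of_dist_le_mul fun x y => ?_
  simp only [NNReal.coe_one, one_mul, dist_eq_norm]
  rcases (norm_nonneg (T x - T y)).eq_or_lt with h0 | hpos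
  · rw [← h0]; exact norm_nonneg _
  · refine le_of_mul_le_mul_right ?_ hpos
    rw [← sq]
    exact (hT x y).trans (real_inner_le_norm _ _)

/-- Minty: the graph of `T⁻¹ - Id` cannot be enlarged because `T` is defined everywhere. -/
theorem isMaxMonotone_rmiOp (hT : FirmlyNonexpansive T) : IsMaxMonotone (rmiOp T) := by
  refine ⟨fun x u y v (hu : T (x + u) = x) (hv : T (y + v) = y) => ?_, fun B hB hsub x v hv => ?_⟩
  · have h := hT (x + u) (y + v)
    rw [hu, hv, show x + u - (y + v) = (x - y) + (u - v) by abel, inner_add_left,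
      real_inner_self_eq_norm_sq, real_inner_comm] at h
    linarith
  · set y := T (x + v)
    have hy : x + v - y ∈ rmiOp T y := by
      show T (y + (x + v - y)) = y
      rw [add_sub_cancel]
    have h := hB hv (hsub y hy)
    rw [show v - (x + v - y) = -(x - y) by abel, inner_neg_right,
      real_inner_self_eq_norm_sq] at h
    show y = x
    rw [eq_comm, ← sub_eq_zero, ← norm_eq_zero]
    nlinarith [norm_nonneg (x - y)]

end FirmlyNonexpansive

theorem IsMonotoneOp.graphInv {A : H → Set H} (hA : IsMonotoneOp A) :
    IsMonotoneOp (graphInv A) := fun _ _ _ _ hu hv => by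
  simpa only [real_inner_comm] using hA hu hv

theorem IsMaxMonotone.graphInv {A : H → Set H} (hA : IsMaxMonotone A) :
    IsMaxMonotone (graphInv A) :=
  ⟨hA.1.graphInv, fun B hB hsub _ x hx =>
    hA.2 (_root_.graphInv B) hB.graphInv (fun _ _ hw => hsub _ hw) x hx⟩

namespace IsResolventOf

variable {A : H → Set H} {J : H → H}

theorem firmlyNonexpansive (hA : IsMonotoneOp A) (hJ : IsResolventOf A J) :
    FirmlyNonexpansive J := fun a b => by
  have h := hA (hJ.mem_sub a) (hJ.mem_sub b)
  rw [show a - J a - (b - J b) = (a - b) - (J a - J b) by abel, inner_sub_right,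
    real_inner_self_eq_norm_sq, real_inner_comm] at h
  linarith

end IsResolventOf

end Operators

theorem measurable_of_forall_measurable_inner_s3 {Ω X : Type*} [MeasurableSpace Ω]
    [NormedAddCommGroup X] [InnerProductSpace ℝ X] [CompleteSpace X]
    [SecondCountableTopology X] [MeasurableSpace X] [BorelSpace X] {f : Ω → X}
    (h : ∀ c : X, Measurable fun ω => ⟪c, f ω⟫) : Measurable f := by
  -- pairing with a dense sequence is a continuous injection of the Polish space `X` into `ℕ → ℝ`
  obtain ⟨d, hd⟩ := TopologicalSpace.exists_dense_seq X
  have hemb : MeasurableEmbedding fun x : X => fun n => ⟪d n, x⟫ := by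
    refine Continuous.measurableEmbedding (by fun_prop) fun x y hxy => ext_inner_left ℝ fun c => ?_
    exact congrFun (hd.equalizer (g := fun c => ⟪c, x⟫) (h := fun c => ⟪c, y⟫) (by fun_prop)
      (by fun_prop) (funext (congrFun hxy))) c
  exact hemb.measurable_comp_iff.1 (measurable_pi_lambda _ fun n => h (d n))

theorem memLp_two_of_lintegral_nnnorm_sq_lt_top {Ω E : Type*} [MeasurableSpace Ω]
    {μ : Measure Ω} [NormedAddCommGroup E] {f : Ω → E} (hf : AEStronglyMeasurable f μ)
    (h : (∫⁻ ω, (‖f ω‖₊ : ℝ≥0∞) ^ 2 ∂μ) < ⊤) : MemLp f 2 μ :=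
  ⟨hf, (eLpNorm_lt_top_iff_lintegral_rpow_enorm_lt_top two_ne_zero ENNReal.ofNat_ne_top).2
    (by simpa [enorm] using h)⟩

section IntegralMixture

variable {Ω X H : Type*} [MeasurableSpace Ω] {μ : Measure Ω}
  [NormedAddCommGroup X] [InnerProductSpace ℝ X]
  [NormedAddCommGroup H] [InnerProductSpace ℝ H] [MeasurableSpace H] [BorelSpace H]
  {L : Ω → X →L[ℝ] H}

theorem integrable_norm_apply_sq (hL : ∀ ξ, Measurable fun ω => L ω ξ)
    (hLint : Integrable (fun ω => ‖L ω‖ ^ 2) μ) (ξ : X) :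
    Integrable (fun ω => ‖L ω ξ‖ ^ 2) μ :=
  (hLint.mul_const (‖ξ‖ ^ 2)).mono' ((hL ξ).norm.pow_const 2).aestronglyMeasurable
    (ae_of_all _ fun ω => by
      rw [Real.norm_eq_abs, abs_of_nonneg (sq_nonneg _), ← mul_pow]
      exact pow_le_pow_left₀ (norm_nonneg _) ((L ω).le_opNorm ξ) 2)

theorem integral_norm_apply_sq_le (hL : ∀ ξ, Measurable fun ω => L ω ξ)
    (hLint : Integrable (fun ω => ‖L ω‖ ^ 2) μ) (hL1 : ∫ ω, ‖L ω‖ ^ 2 ∂μ ≤ 1) (ξ : X) :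
    ∫ ω, ‖L ω ξ‖ ^ 2 ∂μ ≤ ‖ξ‖ ^ 2 :=
  calc ∫ ω, ‖L ω ξ‖ ^ 2 ∂μ ≤ ∫ ω, ‖L ω‖ ^ 2 * ‖ξ‖ ^ 2 ∂μ :=
        integral_mono (integrable_norm_apply_sq hL hLint ξ) (hLint.mul_const _) fun ω => by
          rw [← mul_pow]
          exact pow_le_pow_left₀ (norm_nonneg _) ((L ω).le_opNorm ξ) 2
    _ = (∫ ω, ‖L ω‖ ^ 2 ∂μ) * ‖ξ‖ ^ 2 := integral_mul_const _ _
    _ ≤ ‖ξ‖ ^ 2 := mul_le_of_le_one_left (sq_nonneg _) hL1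

variable [CompleteSpace X] [SecondCountableTopology X] [MeasurableSpace X] [BorelSpace X]
  [CompleteSpace H] [SecondCountableTopology H]

theorem measurable_adjoint_apply_s3 (hL : ∀ ξ, Measurable fun ω => L ω ξ) {y : Ω → H}
    (hy : Measurable y) : Measurable fun ω => (L ω).adjoint (y ω) :=
  measurable_of_forall_measurable_inner_s3 fun c => by
    simpa only [ContinuousLinearMap.adjoint_inner_right] using (hL c).inner hy

variable {J : Ω → H → H}

theorem integrable_adjoint_comp (hJ : ∀ ω, LipschitzWith 1 (J ω))
    (hJmeas : ∀ y : Ω → H, Measurable y → Measurable fun ω => J ω (y ω))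
    (hL : ∀ ξ, Measurable fun ω => L ω ξ) (hLint : Integrable (fun ω => ‖L ω‖ ^ 2) μ)
    {p : Ω → H} (hp : MemLp p 2 μ) (hJp : MemLp (fun ω => J ω (p ω)) 2 μ) (ξ : X) :
    Integrable (fun ω => (L ω).adjoint (J ω (L ω ξ))) μ := by
  have hp2 := (memLp_two_iff_integrable_sq_norm hp.1).1 hp
  have hJp2 := (memLp_two_iff_integrable_sq_norm hJp.1).1 hJp
  refine ((hLint.mul_const (‖ξ‖ + 1)).add (hp2.add hJp2)).mono'
    (measurable_adjoint_apply_s3 hL (hJmeas _ (hL ξ))).aestronglyMeasurable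
    (ae_of_all _ fun ω => ?_)
  -- nonexpansiveness compares `J_ω (L_ω ξ)` with the square-integrable `J_ω (p ω)`
  have hJle : ‖J ω (L ω ξ)‖ ≤ ‖L ω‖ * ‖ξ‖ + (‖p ω‖ + ‖J ω (p ω)‖) := by
    have h1 := (hJ ω).dist_le_mul (L ω ξ) (p ω)
    simp only [NNReal.coe_one, one_mul, dist_eq_norm] at h1
    have h2 := norm_sub_norm_le (J ω (L ω ξ)) (J ω (p ω))
    have h3 := norm_sub_le (L ω ξ) (p ω)
    have h4 := (L ω).le_opNorm ξ
    linarith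
  have hadj : ‖(L ω).adjoint (J ω (L ω ξ))‖ ≤ ‖L ω‖ * ‖J ω (L ω ξ)‖ := by
    simpa only [LinearIsometryEquiv.norm_map] using (L ω).adjoint.le_opNorm _
  have hLJle := mul_le_mul_of_nonneg_left hJle (norm_nonneg (L ω))
  simp only [Pi.add_apply]
  nlinarith [norm_nonneg (L ω), norm_nonneg ξ, sq_nonneg (‖L ω‖ - (‖p ω‖ + ‖J ω (p ω)‖)),
    norm_nonneg (p ω), norm_nonneg (J ω (p ω))]

theorem FirmlyNonexpansive.integral_adjoint_comp (hJ : ∀ ω, FirmlyNonexpansive (J ω))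
    (hJmeas : ∀ y : Ω → H, Measurable y → Measurable fun ω => J ω (y ω))
    (hL : ∀ ξ, Measurable fun ω => L ω ξ) (hLint : Integrable (fun ω => ‖L ω‖ ^ 2) μ)
    (hL1 : ∫ ω, ‖L ω‖ ^ 2 ∂μ ≤ 1) {p : Ω → H} (hp : MemLp p 2 μ)
    (hJp : MemLp (fun ω => J ω (p ω)) 2 μ) :
    FirmlyNonexpansive fun ξ : X => ∫ ω, (L ω).adjoint (J ω (L ω ξ)) ∂μ := by
  intro ξ η
  have hint := integrable_adjoint_comp (fun ω => (hJ ω).lipschitzWith) hJmeas hL hLint hp hJp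
  set d : Ω → H := fun ω => J ω (L ω ξ) - J ω (L ω η)
  set u := (∫ ω, (L ω).adjoint (J ω (L ω ξ)) ∂μ) - ∫ ω, (L ω).adjoint (J ω (L ω η)) ∂μ
    with hu
  have hd_le : ∀ ω, ‖d ω‖ ≤ ‖L ω (ξ - η)‖ := fun ω => by
    simpa [map_sub, dist_eq_norm] using (hJ ω).lipschitzWith.dist_le_mul (L ω ξ) (L ω η)
  have hd2 : Integrable (fun ω => ‖d ω‖ ^ 2) μ :=
    (integrable_norm_apply_sq hL hLint (ξ - η)).mono'
      (((hJmeas _ (hL ξ)).sub (hJmeas _ (hL η))).norm.pow_const 2).aestronglyMeasurable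
      (ae_of_all _ fun ω => by
        rw [Real.norm_eq_abs, abs_of_nonneg (sq_nonneg _)]
        exact pow_le_pow_left₀ (norm_nonneg _) (hd_le ω) 2)
  have hLd : Integrable (fun ω => (L ω).adjoint (d ω)) μ := by
    simpa only [d, map_sub] using (hint ξ).sub' (hint η)
  have hu_eq : u = ∫ ω, (L ω).adjoint (d ω) ∂μ := by
    simp only [hu, d, map_sub, integral_sub (hint ξ) (hint η)]
  have inner_u : ∀ v : X, ⟪v, u⟫ = ∫ ω, ⟪L ω v, d ω⟫ ∂μ := fun v => by
    simp only [hu_eq, ← integral_inner hLd, ContinuousLinearMap.adjoint_inner_right]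
  have hinner_int : ∀ v : X, Integrable (fun ω => ⟪L ω v, d ω⟫) μ := fun v => by
    simpa only [ContinuousLinearMap.adjoint_inner_right] using hLd.const_inner (𝕜 := ℝ) v
  have lower : ∫ ω, ‖d ω‖ ^ 2 ∂μ ≤ ⟪ξ - η, u⟫ := by
    rw [inner_u]
    refine integral_mono hd2 (hinner_int _) fun ω => ?_
    simpa only [map_sub] using hJ ω (L ω ξ) (L ω η)
  -- `⟪L_ω u, d_ω⟫ ≤ (‖L_ω u‖² + ‖d_ω‖²) / 2` integrates to `‖u‖² ≤ (‖u‖² + ∫ ‖d‖²) / 2`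
  have upper : ‖u‖ ^ 2 ≤ ∫ ω, ‖d ω‖ ^ 2 ∂μ := by
    have hLu := integrable_norm_apply_sq hL hLint u
    have h : ‖u‖ ^ 2 ≤ (∫ ω, ‖L ω u‖ ^ 2 ∂μ + ∫ ω, ‖d ω‖ ^ 2 ∂μ) / 2 :=
      calc ‖u‖ ^ 2 = ∫ ω, ⟪L ω u, d ω⟫ ∂μ := by rw [← inner_u, real_inner_self_eq_norm_sq]
        _ ≤ ∫ ω, (‖L ω u‖ ^ 2 + ‖d ω‖ ^ 2) / 2 ∂μ :=
          integral_mono (hinner_int u) ((hLu.add hd2).div_const 2) fun ω => by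
            nlinarith [real_inner_le_norm (L ω u) (d ω), sq_nonneg (‖L ω u‖ - ‖d ω‖)]
        _ = (∫ ω, ‖L ω u‖ ^ 2 ∂μ + ∫ ω, ‖d ω‖ ^ 2 ∂μ) / 2 := by
          rw [integral_div, integral_add hLu hd2]
    linarith [integral_norm_apply_sq_le hL hLint hL1 u]
  exact upper.trans lower

end IntegralMixture

theorem stmt_3_general
    {Ω : Type*} [MeasurableSpace Ω] {μ : Measure Ω}
    {X : Type*} [NormedAddCommGroup X] [InnerProductSpace ℝ X] [CompleteSpace X]
    [SecondCountableTopology X] [MeasurableSpace X] [BorelSpace X]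
    {H : Type*} [NormedAddCommGroup H] [InnerProductSpace ℝ H] [CompleteSpace H]
    [SecondCountableTopology H] [MeasurableSpace H] [BorelSpace H]
    -- the family of maximally monotone operators, with its resolvents `JA ω = J_{A_ω}`
    -- and the resolvents `JAinv ω = J_{A_ω⁻¹}` of the inverses
    (A : Ω → H → Set H) (JA JAinv : Ω → H → H)
    (hAmax : ∀ ω, IsMaxMonotone (A ω))
    (hJA : ∀ ω, IsResolventOf (A ω) (JA ω))
    (hJAinv : ∀ ω, IsResolventOf (graphInv (A ω)) (JAinv ω))
    (hJAmeas : ∀ x : Ω → H, Measurable x → Measurable fun ω => JA ω (x ω))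
    (hdom : ∃ x xs : Ω → H, Measurable x ∧ Measurable xs ∧
      (∫⁻ ω, (‖x ω‖₊ : ℝ≥0∞) ^ 2 ∂μ) < ⊤ ∧ (∫⁻ ω, (‖xs ω‖₊ : ℝ≥0∞) ^ 2 ∂μ) < ⊤ ∧
      ∀ᵐ ω ∂μ, xs ω ∈ A ω (x ω))
    -- the family of bounded linear operators
    (L : Ω → X →L[ℝ] H)
    (hLmeas : ∀ ξ : X, Measurable fun ω => L ω ξ)
    (hLint : Integrable (fun ω => ‖L ω‖ ^ 2) μ)
    (hL1 : (∫ ω, ‖L ω‖ ^ 2 ∂μ) ≤ 1)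
    :
    IsMaxMonotone (rmiOp fun ξ : X => ∫ ω, (L ω).adjoint (JA ω (L ω ξ)) ∂μ) ∧
    IsMaxMonotone
      (graphInv (rmiOp fun ξ : X => ∫ ω, (L ω).adjoint (JAinv ω (L ω ξ)) ∂μ)) := by
  obtain ⟨x, xs, hx, hxs, hx2, hxs2, hxA⟩ := hdom
  have hxL2 := memLp_two_of_lintegral_nnnorm_sq_lt_top hx.aestronglyMeasurable hx2
  have hxsL2 := memLp_two_of_lintegral_nnnorm_sq_lt_top hxs.aestronglyMeasurable hxs2
  have moreau : ∀ ω z, JAinv ω z = z - JA ω z := fun ω => (hJA ω).graphInv_apply (hJAinv ω)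
  have hJA_p : ∀ᵐ ω ∂μ, JA ω (x ω + xs ω) = x ω :=
    hxA.mono fun ω h => (hJA ω _ _).2 (by rwa [add_sub_cancel_left])
  have hJAinv_p : ∀ᵐ ω ∂μ, JAinv ω (x ω + xs ω) = xs ω :=
    hJA_p.mono fun ω h => by rw [moreau, h, add_sub_cancel_left]
  have hW := FirmlyNonexpansive.integral_adjoint_comp
    (fun ω => (hJA ω).firmlyNonexpansive (hAmax ω).1) hJAmeas hLmeas hLint hL1
    (hxL2.add hxsL2) (hxL2.ae_eq (hJA_p.mono fun ω h => h.symm))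
  have hC := FirmlyNonexpansive.integral_adjoint_comp
    (fun ω => (hJAinv ω).firmlyNonexpansive (hAmax ω).1.graphInv)
    (fun y hy => by simp only [moreau]; exact hy.sub (hJAmeas y hy)) hLmeas hLint hL1
    (hxL2.add hxsL2) (hxsL2.ae_eq (hJAinv_p.mono fun ω h => h.symm))
  exact ⟨hW.isMaxMonotone_rmiOp, hC.isMaxMonotone_rmiOp.graphInv⟩

/-- Theorem 3.5(ii): the integral resolvent mixture
`W = rmi(L_ω, A_ω) = (∫ L_ω* ∘ J_{A_ω} ∘ L_ω dμ)⁻¹ − Id` and the integral resolvent comixture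
`C = rcm(L_ω, A_ω) = (rmi(L_ω, A_ω⁻¹))⁻¹` are maximally monotone. -/
theorem stmt_3
    {Ω : Type*} [MeasurableSpace Ω] {μ : Measure Ω} [SigmaFinite μ] [μ.IsComplete]
    {X : Type*} [NormedAddCommGroup X] [InnerProductSpace ℝ X] [CompleteSpace X]
    [SecondCountableTopology X] [MeasurableSpace X] [BorelSpace X]
    {H : Type*} [NormedAddCommGroup H] [InnerProductSpace ℝ H] [CompleteSpace H]
    [SecondCountableTopology H] [MeasurableSpace H] [BorelSpace H]
    -- the family of maximally monotone operators, with its resolvents `JA ω = J_{A_ω}`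
    -- and the resolvents `JAinv ω = J_{A_ω⁻¹}` of the inverses
    (A : Ω → H → Set H) (JA JAinv : Ω → H → H)
    (hAmax : ∀ ω, IsMaxMonotone (A ω))
    (hJA : ∀ ω, IsResolventOf (A ω) (JA ω))
    (hJAinv : ∀ ω, IsResolventOf (graphInv (A ω)) (JAinv ω))
    (hJAmeas : ∀ x : Ω → H, Measurable x → Measurable fun ω => JA ω (x ω))
    (hdom : ∃ x xs : Ω → H, Measurable x ∧ Measurable xs ∧
      (∫⁻ ω, (‖x ω‖₊ : ℝ≥0∞) ^ 2 ∂μ) < ⊤ ∧ (∫⁻ ω, (‖xs ω‖₊ : ℝ≥0∞) ^ 2 ∂μ) < ⊤ ∧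
      ∀ᵐ ω ∂μ, xs ω ∈ A ω (x ω))
    -- the family of bounded linear operators
    (L : Ω → X →L[ℝ] H)
    (hLmeas : ∀ ξ : X, Measurable fun ω => L ω ξ)
    (hLint : Integrable (fun ω => ‖L ω‖ ^ 2) μ)
    (hL0 : 0 < ∫ ω, ‖L ω‖ ^ 2 ∂μ) (hL1 : (∫ ω, ‖L ω‖ ^ 2 ∂μ) ≤ 1)
    :
    IsMaxMonotone (rmiOp fun ξ : X => ∫ ω, (L ω).adjoint (JA ω (L ω ξ)) ∂μ) ∧
    IsMaxMonotone
      (graphInv (rmiOp fun ξ : X => ∫ ω, (L ω).adjoint (JAinv ω (L ω ξ)) ∂μ)) :=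
  stmt_3_general A JA JAinv hAmax hJA hJAinv hJAmeas hdom L hLmeas hLint hL1
end

section
/- Under the stated hypotheses, the resolvent of the integral resolvent comixture C = rcm(L_ω, A_ω)_{ω∈Ω} is J_C = Id_X + ∫_Ω (L_ω* ∘ J_{A_ω} ∘ L_ω − L_ω* ∘ L_ω) μ(dω), i.e., for every 𝗑 ∈ X, J_C 𝗑 = 𝗑 + ∫_Ω (L_ω*(J_{A_ω}(L_ω 𝗑)) − L_ω*(L_ω 𝗑)) μ(dω); equivalently, C = (Id_X + ∫_Ω (L_ω* ∘ J_{A_ω} ∘ L_ω − L_ω* ∘ L_ω) μ(dω))⁻¹ − Id_X. -/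
/-!
Minty's identity `J_{B⁻¹} = Id − J_B` does all the work. By construction the resolvent of
`rmi(L_ω, A_ω⁻¹) = R⁻¹ − Id` is `R = ∫ L_ω* ∘ J_{A_ω⁻¹} ∘ L_ω`, so the resolvent of its inverse
`C` is `Id − R`; and Minty's identity for each `A_ω` rewrites the integrand of `R` as
`L_ω* ∘ L_ω − L_ω* ∘ J_{A_ω} ∘ L_ω`.
-/


open MeasureTheory
open scoped ENNReal NNReal

section Resolvent

variable {H : Type*} [AddCommGroup H] {A : H → Set H} {J : H → H}

theorem IsResolventOf.unique {J' : H → H} (hJ : IsResolventOf A J)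
    (hJ' : IsResolventOf A J') : J = J' :=
  funext fun x => (hJ x (J' x)).mpr ((hJ' x (J' x)).mp rfl)

theorem IsResolventOf.graphInv (hJ : IsResolventOf A J) :
    IsResolventOf (graphInv A) (fun x => x - J x) := by
  intro x y
  constructor
  · rintro rfl
    show x - J x ∈ A (x - (x - J x))
    rw [sub_sub_cancel]
    exact (hJ x (J x)).mp rfl
  · intro hy
    have hJx : J x = x - y := (hJ x (x - y)).mpr (by rw [sub_sub_cancel]; exact hy)
    show x - J x = y
    rw [hJx, sub_sub_cancel]

theorem IsResolventOf.eq_rmiOp (hJ : IsResolventOf A J) : A = rmiOp J := by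
  funext x
  ext u
  show u ∈ A x ↔ J (x + u) = x
  rw [hJ (x + u) x, add_sub_cancel_left]

theorem isResolventOf_rmiOp (R : H → H) : IsResolventOf (rmiOp R) R := by
  intro x y
  show R x = y ↔ R (y + (x - y)) = y
  rw [add_sub_cancel]

end Resolvent

theorem stmt_5_general
    {Ω : Type*} [MeasurableSpace Ω] {μ : Measure Ω}
    {X : Type*} [NormedAddCommGroup X] [InnerProductSpace ℝ X] [CompleteSpace X]
    {H : Type*} [NormedAddCommGroup H] [InnerProductSpace ℝ H] [CompleteSpace H]
    -- the family of maximally monotone operators, with its resolvents `JA ω = J_{A_ω}`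
    -- and the resolvents `JAinv ω = J_{A_ω⁻¹}` of the inverses
    (A : Ω → H → Set H) (JA JAinv : Ω → H → H)
    (hJA : ∀ ω, IsResolventOf (A ω) (JA ω))
    (hJAinv : ∀ ω, IsResolventOf (graphInv (A ω)) (JAinv ω))
    -- the family of bounded linear operators
    (L : Ω → X →L[ℝ] H)
    :
    IsResolventOf
      (graphInv (rmiOp fun ξ : X => ∫ ω, (L ω).adjoint (JAinv ω (L ω ξ)) ∂μ))
      (fun ξ : X =>
        ξ + ∫ ω, ((L ω).adjoint (JA ω (L ω ξ)) - (L ω).adjoint (L ω ξ)) ∂μ) ∧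
    graphInv (rmiOp fun ξ : X => ∫ ω, (L ω).adjoint (JAinv ω (L ω ξ)) ∂μ)
      = rmiOp (fun ξ : X =>
          ξ + ∫ ω, ((L ω).adjoint (JA ω (L ω ξ)) - (L ω).adjoint (L ω ξ)) ∂μ) := by
  set R : X → X := fun ξ => ∫ ω, (L ω).adjoint (JAinv ω (L ω ξ)) ∂μ
  have minty : ∀ ω, JAinv ω = fun h => h - JA ω h :=
    fun ω => (hJAinv ω).unique (hJA ω).graphInv
  have hR : ∀ ξ, R ξ = -∫ ω, ((L ω).adjoint (JA ω (L ω ξ)) - (L ω).adjoint (L ω ξ)) ∂μ := by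
    intro ξ
    dsimp only [R]
    rw [← integral_neg]
    congr 1
    funext ω
    rw [minty, map_sub, neg_sub]
  have hJC : (fun ξ : X =>
      ξ + ∫ ω, ((L ω).adjoint (JA ω (L ω ξ)) - (L ω).adjoint (L ω ξ)) ∂μ) =
      fun ξ => ξ - R ξ := by
    funext ξ
    rw [hR, sub_neg_eq_add]
  have hC := (isResolventOf_rmiOp R).graphInv
  rw [hJC]
  exact ⟨hC, hC.eq_rmiOp⟩

/-- Theorem 3.5(iii)&(vi): the resolvent of the integral resolvent comixture
`C = rcm(L_ω, A_ω)` is `J_C = Id + ∫ (L_ω* ∘ J_{A_ω} ∘ L_ω − L_ω* ∘ L_ω) dμ`; equivalently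
`C = (Id + ∫ (L_ω* ∘ J_{A_ω} ∘ L_ω − L_ω* ∘ L_ω) dμ)⁻¹ − Id`. -/
theorem stmt_5
    {Ω : Type*} [MeasurableSpace Ω] {μ : Measure Ω} [SigmaFinite μ] [μ.IsComplete]
    {X : Type*} [NormedAddCommGroup X] [InnerProductSpace ℝ X] [CompleteSpace X]
    [SecondCountableTopology X] [MeasurableSpace X] [BorelSpace X]
    {H : Type*} [NormedAddCommGroup H] [InnerProductSpace ℝ H] [CompleteSpace H]
    [SecondCountableTopology H] [MeasurableSpace H] [BorelSpace H]
    -- the family of maximally monotone operators, with its resolvents `JA ω = J_{A_ω}`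
    -- and the resolvents `JAinv ω = J_{A_ω⁻¹}` of the inverses
    (A : Ω → H → Set H) (JA JAinv : Ω → H → H)
    (hAmax : ∀ ω, IsMaxMonotone (A ω))
    (hJA : ∀ ω, IsResolventOf (A ω) (JA ω))
    (hJAinv : ∀ ω, IsResolventOf (graphInv (A ω)) (JAinv ω))
    (hJAmeas : ∀ x : Ω → H, Measurable x → Measurable fun ω => JA ω (x ω))
    (hdom : ∃ x xs : Ω → H, Measurable x ∧ Measurable xs ∧
      (∫⁻ ω, (‖x ω‖₊ : ℝ≥0∞) ^ 2 ∂μ) < ⊤ ∧ (∫⁻ ω, (‖xs ω‖₊ : ℝ≥0∞) ^ 2 ∂μ) < ⊤ ∧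
      ∀ᵐ ω ∂μ, xs ω ∈ A ω (x ω))
    -- the family of bounded linear operators
    (L : Ω → X →L[ℝ] H)
    (hLmeas : ∀ ξ : X, Measurable fun ω => L ω ξ)
    (hLint : Integrable (fun ω => ‖L ω‖ ^ 2) μ)
    (hL0 : 0 < ∫ ω, ‖L ω‖ ^ 2 ∂μ) (hL1 : (∫ ω, ‖L ω‖ ^ 2 ∂μ) ≤ 1)
    :
    IsResolventOf
      (graphInv (rmiOp fun ξ : X => ∫ ω, (L ω).adjoint (JAinv ω (L ω ξ)) ∂μ))
      (fun ξ : X =>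
        ξ + ∫ ω, ((L ω).adjoint (JA ω (L ω ξ)) - (L ω).adjoint (L ω ξ)) ∂μ) ∧
    graphInv (rmiOp fun ξ : X => ∫ ω, (L ω).adjoint (JAinv ω (L ω ξ)) ∂μ)
      = rmiOp (fun ξ : X =>
          ξ + ∫ ω, ((L ω).adjoint (JA ω (L ω ξ)) - (L ω).adjoint (L ω ξ)) ∂μ) :=
  stmt_5_general A JA JAinv hJA hJAinv L
end
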